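/- arXiv:1707.07269 — 2 statements merged into one kernel-verified Lean document; each statement's English description precedes it below -/
import Mathlib

section
/- Let X, X' ∼ N(0,1) and Y, Y' ∼ N(μ,1) all independent, and k_ν the Gaussian kernel with bandwidth ν. Then MMD² := E[k_ν(X,X')] - 2E[k_ν(X,Y)] + E[k_ν(Y,Y')] = (2ν/√(ν²+2)) (1 - exp(-μ²/(2(ν²+2)))). -/
/-!
The difference of two independent Gaussians `N(m₁, v₁)`, `N(m₂, v₂)` is
`N(m₁ - m₂, v₁ + v₂)`, so each kernel expectation is a single Gaussian integral
`E[exp (-Z² / (2s))] = √(s / (s + v)) · exp (-m² / (2(s + v)))` for `Z ∼ N(m, v)`,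
obtained by completing the square. The two within-sample terms have `m = 0`, the cross term
has `m = -μ`.
-/

open MeasureTheory ProbabilityTheory Real
open scoped NNReal

lemma integral_exp_neg_mul_sq_sub (b c : ℝ) :
    ∫ x : ℝ, exp (-b * (x - c) ^ 2) = √(π / b) := by
  rw [integral_sub_right_eq_self (fun x => exp (-b * x ^ 2)) c, integral_gaussian]

lemma integral_exp_neg_sq_div_gaussianReal {s : ℝ} (hs : 0 < s) (m : ℝ) (v : ℝ≥0) :
    ∫ x, exp (-x ^ 2 / (2 * s)) ∂gaussianReal m v
      = √(s / (s + v)) * exp (-m ^ 2 / (2 * (s + v))) := by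
  rcases eq_or_ne v 0 with rfl | hv
  · simp [gaussianReal_zero_var, div_self hs.ne']
  have hsq : ∀ x, gaussianPDFReal m v x • exp (-x ^ 2 / (2 * s))
      = (√(2 * π * v))⁻¹ * exp (-m ^ 2 / (2 * (s + v)))
        * exp (-((s + v) / (2 * s * v)) * (x - s * m / (s + v)) ^ 2) := by
    intro x
    rw [gaussianPDFReal, smul_eq_mul, mul_assoc _ (exp _), mul_assoc _ (exp _), ← exp_add,
      ← exp_add]
    congr 2
    field_simp
    ring
  have hroot : √(π / ((s + v) / (2 * s * v))) = √(2 * π * v) * √(s / (s + v)) := by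
    rw [← sqrt_mul (by positivity)]
    congr 1
    field_simp
  calc ∫ x, exp (-x ^ 2 / (2 * s)) ∂gaussianReal m v
      = ∫ x, gaussianPDFReal m v x • exp (-x ^ 2 / (2 * s)) :=
        integral_gaussianReal_eq_integral_smul hv
    _ = (√(2 * π * v))⁻¹ * exp (-m ^ 2 / (2 * (s + v)))
          * √(π / ((s + v) / (2 * s * v))) := by
        simp_rw [hsq]
        rw [integral_const_mul, integral_exp_neg_mul_sq_sub]
    _ = √(s / (s + v)) * exp (-m ^ 2 / (2 * (s + v))) := by
        rw [hroot]
        field_simp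

lemma map_sub_eq_gaussianReal_of_indepFun {Ω : Type*} {mΩ : MeasurableSpace Ω} {P : Measure Ω}
    {m₁ m₂ : ℝ} {v₁ v₂ : ℝ≥0} {X Y : Ω → ℝ} (hXY : IndepFun X Y P)
    (hX : P.map X = gaussianReal m₁ v₁) (hY : P.map Y = gaussianReal m₂ v₂) :
    P.map (X - Y) = gaussianReal (m₁ - m₂) (v₁ + v₂) := by
  have hYm : AEMeasurable Y P := AEMeasurable.of_map_ne_zero (by simp [NeZero.ne, hY])
  have hnegY : P.map (-Y) = gaussianReal (-m₂) v₂ := by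
    rw [← gaussianReal_map_neg, ← hY, AEMeasurable.map_map_of_aemeasurable (by fun_prop) hYm]
    rfl
  rw [sub_eq_add_neg, sub_eq_add_neg]
  exact gaussianReal_add_gaussianReal_of_indepFun (hXY.comp measurable_id measurable_neg) hX hnegY

lemma integral_exp_neg_sq_sub_div_of_indepFun {Ω : Type*} {mΩ : MeasurableSpace Ω}
    {P : Measure Ω} {m₁ m₂ s : ℝ} {v₁ v₂ : ℝ≥0} {X Y : Ω → ℝ} (hs : 0 < s)
    (hXY : IndepFun X Y P)
    (hX : P.map X = gaussianReal m₁ v₁) (hY : P.map Y = gaussianReal m₂ v₂) :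
    ∫ ω, exp (-(X ω - Y ω) ^ 2 / (2 * s)) ∂P
      = √(s / (s + (v₁ + v₂))) * exp (-(m₁ - m₂) ^ 2 / (2 * (s + (v₁ + v₂)))) := by
  have hlaw := map_sub_eq_gaussianReal_of_indepFun hXY hX hY
  have hXYm : AEMeasurable (X - Y) P := AEMeasurable.of_map_ne_zero (by simp [NeZero.ne, hlaw])
  rw [← NNReal.coe_add, ← integral_exp_neg_sq_div_gaussianReal hs, ← hlaw,
    integral_map hXYm (by fun_prop)]
  rfl

theorem stmt_14_general {Ω : Type*} {mΩ : MeasurableSpace Ω} (P : Measure Ω)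
    (X X' Y Y' : Ω → ℝ) (μ ν : ℝ) (hν : 0 < ν)
    (hindep : iIndepFun (m := fun _ : Fin 4 => (inferInstance : MeasurableSpace ℝ))
      ![X, X', Y, Y'] P)
    (hX : Measure.map X P = gaussianReal 0 1)
    (hX' : Measure.map X' P = gaussianReal 0 1)
    (hY : Measure.map Y P = gaussianReal μ 1)
    (hY' : Measure.map Y' P = gaussianReal μ 1) :
    (∫ ω, Real.exp (-(X ω - X' ω)^2 / (2 * ν^2)) ∂P)
      - 2 * (∫ ω, Real.exp (-(X ω - Y ω)^2 / (2 * ν^2)) ∂P)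
      + (∫ ω, Real.exp (-(Y ω - Y' ω)^2 / (2 * ν^2)) ∂P)
      = (2 * ν / Real.sqrt (ν^2 + 2)) * (1 - Real.exp (-μ^2 / (2 * (ν^2 + 2)))) := by
  have hXX' : IndepFun X X' P := by simpa using hindep.indepFun (i := 0) (j := 1) (by decide)
  have hXY : IndepFun X Y P := by simpa using hindep.indepFun (i := 0) (j := 2) (by decide)
  have hYY' : IndepFun Y Y' P := by simpa using hindep.indepFun (i := 2) (j := 3) (by decide)
  have hs : 0 < ν ^ 2 := by positivity
  have hroot : √(ν ^ 2 / (ν ^ 2 + 2)) = ν / √(ν ^ 2 + 2) := by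
    rw [sqrt_div' _ (by positivity), sqrt_sq hν.le]
  rw [integral_exp_neg_sq_sub_div_of_indepFun hs hXX' hX hX',
    integral_exp_neg_sq_sub_div_of_indepFun hs hXY hX hY,
    integral_exp_neg_sq_sub_div_of_indepFun hs hYY' hY hY']
  norm_num [hroot]
  ring

theorem stmt_14 {Ω : Type*} {mΩ : MeasurableSpace Ω} (P : Measure Ω)
    [IsProbabilityMeasure P] (X X' Y Y' : Ω → ℝ) (μ ν : ℝ) (hν : 0 < ν)
    (hXm : Measurable X) (hX'm : Measurable X')
    (hYm : Measurable Y) (hY'm : Measurable Y')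
    (hindep : iIndepFun (m := fun _ : Fin 4 => (inferInstance : MeasurableSpace ℝ))
      ![X, X', Y, Y'] P)
    (hX : Measure.map X P = gaussianReal 0 1)
    (hX' : Measure.map X' P = gaussianReal 0 1)
    (hY : Measure.map Y P = gaussianReal μ 1)
    (hY' : Measure.map Y' P = gaussianReal μ 1) :
    (∫ ω, Real.exp (-(X ω - X' ω)^2 / (2 * ν^2)) ∂P)
      - 2 * (∫ ω, Real.exp (-(X ω - Y ω)^2 / (2 * ν^2)) ∂P)
      + (∫ ω, Real.exp (-(Y ω - Y' ω)^2 / (2 * ν^2)) ∂P)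
      = (2 * ν / Real.sqrt (ν^2 + 2)) * (1 - Real.exp (-μ^2 / (2 * (ν^2 + 2)))) :=
  stmt_14_general (mΩ := mΩ) P X X' Y Y' μ ν hν hindep hX hX' hY hY'
end

section
/- Let X, X' ∼ N(0,1) and Y, Y' ∼ N(0,σ²) all independent, and k_ν the Gaussian kernel with bandwidth ν. Then MMD² := E[k_ν(X,X')] - 2E[k_ν(X,Y)] + E[k_ν(Y,Y')] = ν(1/√(ν²+2) + 1/√(ν²+2σ²) - 2/√(ν²+σ²+1)). -/
/-!
If `U ~ N(0, a)` and `V ~ N(0, b)` are independent, then `U - V ~ N(0, a + b)`, and a Gaussian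
integral gives `∫ exp (-x² / (2ν²)) dN(0, s) = ν / √(ν² + s)`. Each of the three kernel
expectations is therefore `ν / √(ν² + a + b)` for the appropriate pair of variances.
-/

open MeasureTheory ProbabilityTheory
open scoped NNReal

namespace ProbabilityTheory

lemma gaussianReal_sub_gaussianReal_of_indepFun {Ω : Type*} {mΩ : MeasurableSpace Ω}
    {P : Measure Ω} {m₁ m₂ : ℝ} {v₁ v₂ : ℝ≥0} {X Y : Ω → ℝ} (hXY : IndepFun X Y P)
    (hX : P.map X = gaussianReal m₁ v₁) (hY : P.map Y = gaussianReal m₂ v₂) :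
    P.map (X - Y) = gaussianReal (m₁ - m₂) (v₁ + v₂) := by
  have hYm : AEMeasurable Y P := AEMeasurable.of_map_ne_zero (by simp [hY, NeZero.ne])
  have hnegY : P.map (-Y) = gaussianReal (-m₂) v₂ := by
    rw [← gaussianReal_map_neg, ← hY, AEMeasurable.map_map_of_aemeasurable (by fun_prop) hYm]
    rfl
  rw [sub_eq_add_neg, sub_eq_add_neg]
  exact gaussianReal_add_gaussianReal_of_indepFun (hXY.comp measurable_id measurable_neg) hX hnegY

lemma integral_exp_neg_sq_div_gaussianReal {t : ℝ} (ht : 0 < t) (v : ℝ≥0) :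
    ∫ x, Real.exp (-x ^ 2 / (2 * t)) ∂gaussianReal 0 v = Real.sqrt (t / (t + v)) := by
  rcases eq_or_ne v 0 with rfl | hv
  · simp [ht.ne']
  have hb : 0 < 1 / (2 * v) + 1 / (2 * t) := by positivity
  rw [integral_gaussianReal_eq_integral_smul hv]
  calc ∫ x, gaussianPDFReal 0 v x • Real.exp (-x ^ 2 / (2 * t))
      = ∫ x, (Real.sqrt (2 * Real.pi * v))⁻¹ *
          Real.exp (-(1 / (2 * v) + 1 / (2 * t)) * x ^ 2) := by
        congr 1 with x
        rw [gaussianPDFReal, smul_eq_mul, mul_assoc, ← Real.exp_add]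
        congr 2
        field_simp
        ring
    _ = (Real.sqrt (2 * Real.pi * v))⁻¹ * Real.sqrt (Real.pi / (1 / (2 * v) + 1 / (2 * t))) := by
        rw [integral_const_mul, integral_gaussian]
    _ = Real.sqrt (t / (t + v)) := by
        rw [← Real.sqrt_inv, ← Real.sqrt_mul (by positivity)]
        congr 1
        field_simp

lemma integral_exp_neg_sq_sub_div_of_indepFun {Ω : Type*} {mΩ : MeasurableSpace Ω}
    {P : Measure Ω} {a b : ℝ≥0} {U V : Ω → ℝ} (hUV : IndepFun U V P)
    (hU : P.map U = gaussianReal 0 a) (hV : P.map V = gaussianReal 0 b) {ν : ℝ} (hν : 0 < ν) :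
    ∫ ω, Real.exp (-(U ω - V ω) ^ 2 / (2 * ν ^ 2)) ∂P = ν / Real.sqrt (ν ^ 2 + a + b) := by
  have hlaw := gaussianReal_sub_gaussianReal_of_indepFun hUV hU hV
  have hUVm : AEMeasurable (U - V) P := AEMeasurable.of_map_ne_zero (by simp [hlaw, NeZero.ne])
  calc ∫ ω, Real.exp (-(U ω - V ω) ^ 2 / (2 * ν ^ 2)) ∂P
      = ∫ x, Real.exp (-x ^ 2 / (2 * ν ^ 2)) ∂P.map (U - V) :=
        (integral_map hUVm (by fun_prop : Continuous fun x : ℝ ↦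
          Real.exp (-x ^ 2 / (2 * ν ^ 2))).aestronglyMeasurable).symm
    _ = Real.sqrt (ν ^ 2 / (ν ^ 2 + (a + b : ℝ≥0))) := by
        rw [hlaw, sub_zero, integral_exp_neg_sq_div_gaussianReal (by positivity)]
    _ = ν / Real.sqrt (ν ^ 2 + a + b) := by
        rw [NNReal.coe_add, ← add_assoc, Real.sqrt_div (sq_nonneg ν), Real.sqrt_sq hν.le]

end ProbabilityTheory

theorem stmt_15_general {Ω : Type*} {mΩ : MeasurableSpace Ω} (P : Measure Ω)
    [IsProbabilityMeasure P] (X X' Y Y' : Ω → ℝ) (σ ν : ℝ) (hν : 0 < ν)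
    (hindep : iIndepFun (m := fun _ : Fin 4 => (inferInstance : MeasurableSpace ℝ))
      ![X, X', Y, Y'] P)
    (hX : Measure.map X P = gaussianReal 0 1)
    (hX' : Measure.map X' P = gaussianReal 0 1)
    (hY : Measure.map Y P = gaussianReal 0 (Real.toNNReal (σ^2)))
    (hY' : Measure.map Y' P = gaussianReal 0 (Real.toNNReal (σ^2))) :
    (∫ ω, Real.exp (-(X ω - X' ω)^2 / (2 * ν^2)) ∂P)
      - 2 * (∫ ω, Real.exp (-(X ω - Y ω)^2 / (2 * ν^2)) ∂P)
      + (∫ ω, Real.exp (-(Y ω - Y' ω)^2 / (2 * ν^2)) ∂P)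
      = ν * (1 / Real.sqrt (ν^2 + 2) + 1 / Real.sqrt (ν^2 + 2*σ^2)
          - 2 / Real.sqrt (ν^2 + σ^2 + 1)) := by
  have hXX' : IndepFun X X' P := by simpa using hindep.indepFun (i := 0) (j := 1) (by decide)
  have hXY : IndepFun X Y P := by simpa using hindep.indepFun (i := 0) (j := 2) (by decide)
  have hYY' : IndepFun Y Y' P := by simpa using hindep.indepFun (i := 2) (j := 3) (by decide)
  rw [integral_exp_neg_sq_sub_div_of_indepFun hXX' hX hX' hν,
    integral_exp_neg_sq_sub_div_of_indepFun hXY hX hY hν,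
    integral_exp_neg_sq_sub_div_of_indepFun hYY' hY hY' hν,
    Real.coe_toNNReal _ (sq_nonneg σ), NNReal.coe_one,
    show ν ^ 2 + 1 + 1 = ν ^ 2 + 2 by ring,
    show ν ^ 2 + σ ^ 2 + σ ^ 2 = ν ^ 2 + 2 * σ ^ 2 by ring,
    show ν ^ 2 + 1 + σ ^ 2 = ν ^ 2 + σ ^ 2 + 1 by ring]
  ring

theorem stmt_15 {Ω : Type*} {mΩ : MeasurableSpace Ω} (P : Measure Ω)
    [IsProbabilityMeasure P] (X X' Y Y' : Ω → ℝ) (σ ν : ℝ) (hν : 0 < ν) (hσ : 0 < σ)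
    (hXm : Measurable X) (hX'm : Measurable X')
    (hYm : Measurable Y) (hY'm : Measurable Y')
    (hindep : iIndepFun (m := fun _ : Fin 4 => (inferInstance : MeasurableSpace ℝ))
      ![X, X', Y, Y'] P)
    (hX : Measure.map X P = gaussianReal 0 1)
    (hX' : Measure.map X' P = gaussianReal 0 1)
    (hY : Measure.map Y P = gaussianReal 0 (Real.toNNReal (σ^2)))
    (hY' : Measure.map Y' P = gaussianReal 0 (Real.toNNReal (σ^2))) :
    (∫ ω, Real.exp (-(X ω - X' ω)^2 / (2 * ν^2)) ∂P)
      - 2 * (∫ ω, Real.exp (-(X ω - Y ω)^2 / (2 * ν^2)) ∂P)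
      + (∫ ω, Real.exp (-(Y ω - Y' ω)^2 / (2 * ν^2)) ∂P)
      = ν * (1 / Real.sqrt (ν^2 + 2) + 1 / Real.sqrt (ν^2 + 2*σ^2)
          - 2 / Real.sqrt (ν^2 + σ^2 + 1)) :=
  stmt_15_general (mΩ := mΩ) P X X' Y Y' σ ν hν hindep hX hX' hY hY'
end
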